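/- Let Σ be a symmetric positive definite p×p matrix with inverse Θ, μ ∈ ℝ^p, Δ > 0, and let 1_R ∈ ℝ^p be a 0–1 vector that is neither zero nor all ones. Set B₁ = 1_p'Θμ, B₂ = 1_p'Θ1_p, B₃ = 1_R'Θ1_p, B₄ = 1_R'Θ1_R, B₅ = 1_R'Θμ, and assume B₁ ≠ 0, B₃ ≠ 0, and B₄B₂ ≠ B₃². Define κ_w = B₁/Δ, a = Θ1_p/B₂, k = Θ1_R/B₃, w_k = B₄/B₃, w_a = B₃/B₂, l = (k − a)/(w_k − w_a), and w_u = 1_R'(Θμ/B₁ − Θ1_p/B₂). Then for any w_x ∈ ℝ, the unique maximizer of w ↦ μ'w − (Δ/2) w'Σw subject to 1_p'w = 1 and 1_R'w = w_x is w_c* = κ_w( Θμ/B₁ − a ) + (w_x − κ_w w_u) l + ( a − l·(B₃/B₂) ). -/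

import Mathlib

/-!
Since `Σ` is positive definite, expanding the utility `U w = μ'w − (Δ/2) w'Σw` around a point `x`
gives `U (x + d) = U x + (μ − ΔΣx)'d − (Δ/2) d'Σd`. If `μ − ΔΣx` is a combination of `1_p` and
`1_R` (the Lagrange condition), the linear term vanishes along every direction `d` preserving both
constraints, so `x` is the strict maximizer on the constraint set. For `x = w_c*` the Lagrange
condition holds because `κ_w / B₁ = 1 / Δ` makes `w_c* − Θμ/Δ` a combination of `a` and `l`, both in
the span of `Θ1_p` and `Θ1_R`; the constraints follow from `1_p'a = 1`, `1_R'a = w_a`, `1_p'l = 0`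
and `1_R'l = 1`.
-/

open Matrix

lemma Matrix.PosDef.isSymm {ι : Type*} {S : Matrix ι ι ℝ} (hS : S.PosDef) : S.IsSymm :=
  isHermitian_iff_isSymm.mp hS.isHermitian

section MeanVariance

variable {ι : Type*} [Fintype ι]

noncomputable def meanVarianceUtility (μ : ι → ℝ) (Δ : ℝ) (S : Matrix ι ι ℝ) (w : ι → ℝ) : ℝ :=
  μ ⬝ᵥ w - Δ / 2 * (w ⬝ᵥ (S *ᵥ w))

lemma Matrix.IsSymm.dotProduct_mulVec_comm {S : Matrix ι ι ℝ} (hS : S.IsSymm) (x y : ι → ℝ) :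
    x ⬝ᵥ (S *ᵥ y) = y ⬝ᵥ (S *ᵥ x) := by
  simpa only [hS.eq] using dotProduct_transpose_mulVec S x y

lemma meanVarianceUtility_add {S : Matrix ι ι ℝ} (hS : S.IsSymm) (μ : ι → ℝ) (Δ : ℝ)
    (x d : ι → ℝ) :
    meanVarianceUtility μ Δ S (x + d) = meanVarianceUtility μ Δ S x
      + (μ - Δ • (S *ᵥ x)) ⬝ᵥ d - Δ / 2 * (d ⬝ᵥ (S *ᵥ d)) := by
  simp only [meanVarianceUtility, mulVec_add, dotProduct_add, add_dotProduct, sub_dotProduct,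
    smul_dotProduct, smul_eq_mul, hS.dotProduct_mulVec_comm x d, dotProduct_comm (S *ᵥ x) d]
  ring

lemma meanVarianceUtility_lt_of_lagrange {S : Matrix ι ι ℝ} (hS : S.PosDef) {Δ : ℝ} (hΔ : 0 < Δ)
    {μ u r x w : ι → ℝ} {δ ν : ℝ} (hx : μ - Δ • (S *ᵥ x) = δ • u + ν • r)
    (hu : u ⬝ᵥ w = u ⬝ᵥ x) (hr : r ⬝ᵥ w = r ⬝ᵥ x) (hne : w ≠ x) :
    meanVarianceUtility μ Δ S w < meanVarianceUtility μ Δ S x := by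
  obtain ⟨d, rfl⟩ : ∃ d, w = x + d := ⟨w - x, by abel⟩
  have hd : d ≠ 0 := fun h => hne (by simp [h])
  have hud : u ⬝ᵥ d = 0 := by simpa [dotProduct_add] using hu
  have hrd : r ⬝ᵥ d = 0 := by simpa [dotProduct_add] using hr
  have hcurv : 0 < d ⬝ᵥ (S *ᵥ d) := by simpa using hS.dotProduct_mulVec_pos hd
  rw [meanVarianceUtility_add hS.isSymm, hx]
  simp only [add_dotProduct, smul_dotProduct, hud, hrd, smul_zero, add_zero]
  nlinarith

variable [DecidableEq ι]

lemma Matrix.mulVec_nonsing_inv_mulVec {S : Matrix ι ι ℝ} (hS : IsUnit S.det) (v : ι → ℝ) :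
    S *ᵥ (S⁻¹ *ᵥ v) = v := by
  rw [mulVec_mulVec, mul_nonsing_inv S hS, one_mulVec]

lemma exists_lagrange_of_sub_mem_span {S : Matrix ι ι ℝ} (hS : IsUnit S.det) {Δ : ℝ}
    (hΔ : Δ ≠ 0) {μ u r x : ι → ℝ}
    (hx : x - Δ⁻¹ • (S⁻¹ *ᵥ μ) ∈ Submodule.span ℝ {S⁻¹ *ᵥ u, S⁻¹ *ᵥ r}) :
    ∃ δ ν : ℝ, μ - Δ • (S *ᵥ x) = δ • u + ν • r := by
  obtain ⟨α, β, hαβ⟩ := Submodule.mem_span_pair.mp hx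
  refine ⟨-(Δ * α), -(Δ * β), ?_⟩
  rw [← sub_add_cancel x (Δ⁻¹ • (S⁻¹ *ᵥ μ)), ← hαβ]
  simp only [mulVec_add, mulVec_smul, mulVec_nonsing_inv_mulVec hS, smul_add, smul_smul,
    mul_inv_cancel₀ hΔ, one_smul]
  module

end MeanVariance

lemma div_sub_div_ne_zero_of_mul_ne_sq {a b c : ℝ} (hb : b ≠ 0) (hc : c ≠ 0) (h : a * c ≠ b ^ 2) :
    a / b - b / c ≠ 0 := by
  rw [div_sub_div _ _ hb hc]
  exact div_ne_zero (sub_ne_zero.mpr (by rwa [← sq])) (mul_ne_zero hb hc)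

section Constraints

variable {ι : Type*} [Fintype ι]

lemma dotProduct_inv_smul_self {x v : ι → ℝ} (h : x ⬝ᵥ v ≠ 0) : x ⬝ᵥ ((x ⬝ᵥ v)⁻¹ • v) = 1 := by
  rw [dotProduct_smul, smul_eq_mul, inv_mul_cancel₀ h]

lemma dotProduct_inv_sub_smul_sub {f g a k : ι → ℝ} {wa wk : ℝ} (hfa : f ⬝ᵥ a = 1)
    (hfk : f ⬝ᵥ k = 1) (hga : g ⬝ᵥ a = wa) (hgk : g ⬝ᵥ k = wk) (hne : wk - wa ≠ 0) :
    f ⬝ᵥ ((wk - wa)⁻¹ • (k - a)) = 0 ∧ g ⬝ᵥ ((wk - wa)⁻¹ • (k - a)) = 1 := by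
  simp only [dotProduct_smul, dotProduct_sub, hfa, hfk, hga, hgk, sub_self, smul_eq_mul,
    mul_zero, inv_mul_cancel₀ hne, and_self]

lemma dotProduct_smul_add_smul_add_sub_smul {f g v a l : ι → ℝ} {wu wa : ℝ} (hfv : f ⬝ᵥ v = 0)
    (hfa : f ⬝ᵥ a = 1) (hfl : f ⬝ᵥ l = 0) (hgv : g ⬝ᵥ v = wu) (hga : g ⬝ᵥ a = wa)
    (hgl : g ⬝ᵥ l = 1) (κ wx : ℝ) :
    f ⬝ᵥ (κ • v + (wx - κ * wu) • l + (a - wa • l)) = 1 ∧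
      g ⬝ᵥ (κ • v + (wx - κ * wu) • l + (a - wa • l)) = wx := by
  simp only [dotProduct_add, dotProduct_sub, dotProduct_smul, smul_eq_mul, hfv, hfa, hfl, hgv,
    hga, hgl]
  constructor <;> ring

end Constraints

theorem stmt4_general (p : ℕ)
    (S : Matrix (Fin p) (Fin p) ℝ) (hS : S.PosDef)
    (μ : Fin p → ℝ) (Del : ℝ) (hDel : 0 < Del)
    (R : Fin p → ℝ)
    (hB1 : (1 : Fin p → ℝ) ⬝ᵥ (S⁻¹ *ᵥ μ) ≠ 0)
    (hB3 : R ⬝ᵥ (S⁻¹ *ᵥ (1 : Fin p → ℝ)) ≠ 0)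
    (hDnz : (R ⬝ᵥ (S⁻¹ *ᵥ R)) * ((1 : Fin p → ℝ) ⬝ᵥ (S⁻¹ *ᵥ (1 : Fin p → ℝ)))
        ≠ (R ⬝ᵥ (S⁻¹ *ᵥ (1 : Fin p → ℝ))) ^ 2) :
    let Th := S⁻¹
    let ones : Fin p → ℝ := 1
    let B1 := ones ⬝ᵥ (Th *ᵥ μ)
    let B2 := ones ⬝ᵥ (Th *ᵥ ones)
    let B3 := R ⬝ᵥ (Th *ᵥ ones)
    let B4 := R ⬝ᵥ (Th *ᵥ R)
    let κw := B1 / Del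
    let a := B2⁻¹ • (Th *ᵥ ones)
    let k := B3⁻¹ • (Th *ᵥ R)
    let wk := B4 / B3
    let wa := B3 / B2
    let l := (wk - wa)⁻¹ • (k - a)
    let wu := R ⬝ᵥ (B1⁻¹ • (Th *ᵥ μ) - B2⁻¹ • (Th *ᵥ ones))
    ∀ wx : ℝ,
      let wc := κw • (B1⁻¹ • (Th *ᵥ μ) - a) + (wx - κw * wu) • l + (a - (B3 / B2) • l)
      (ones ⬝ᵥ wc = 1) ∧ (R ⬝ᵥ wc = wx) ∧
        ∀ w : Fin p → ℝ, ones ⬝ᵥ w = 1 → R ⬝ᵥ w = wx → w ≠ wc →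
          μ ⬝ᵥ w - Del / 2 * (w ⬝ᵥ (S *ᵥ w)) < μ ⬝ᵥ wc - Del / 2 * (wc ⬝ᵥ (S *ᵥ wc)) := by
  intro Th ones B1 B2 B3 B4 κw a k wk wa l wu wx wc
  have hΘ : Th.PosDef := hS.inv
  have hones : ones ≠ 0 := fun h => hB3 (by rw [show (1 : Fin p → ℝ) = 0 from h, mulVec_zero,
    dotProduct_zero])
  have hB2 : B2 ≠ 0 := by simpa using (hΘ.dotProduct_mulVec_pos hones).ne'
  have hD : wk - wa ≠ 0 := div_sub_div_ne_zero_of_mul_ne_sq hB3 hB2 hDnz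
  have h1a : ones ⬝ᵥ a = 1 := dotProduct_inv_smul_self hB2
  have hRa : R ⬝ᵥ a = wa := by rw [dotProduct_smul, smul_eq_mul, inv_mul_eq_div]
  have h1k : ones ⬝ᵥ k = 1 := by
    rw [dotProduct_smul, hΘ.isSymm.dotProduct_mulVec_comm ones R]; exact inv_mul_cancel₀ hB3
  have hRk : R ⬝ᵥ k = wk := by rw [dotProduct_smul, smul_eq_mul, inv_mul_eq_div]
  obtain ⟨h1l, hRl⟩ := dotProduct_inv_sub_smul_sub h1a h1k hRa hRk hD
  have h1v : ones ⬝ᵥ (B1⁻¹ • (Th *ᵥ μ) - a) = 0 := by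
    rw [dotProduct_sub, dotProduct_inv_smul_self hB1, h1a, sub_self]
  obtain ⟨h1wc, hRwc⟩ :=
    dotProduct_smul_add_smul_add_sub_smul h1v h1a h1l rfl hRa hRl κw wx
  refine ⟨h1wc, hRwc, fun w hw1 hwR hne => ?_⟩
  have hκ : κw * B1⁻¹ = Del⁻¹ :=
    (div_mul_eq_mul_div B1 Del B1⁻¹).trans (by rw [mul_inv_cancel₀ hB1, one_div])
  have hwc : wc - Del⁻¹ • (Th *ᵥ μ) = (wx - κw * wu - wa) • l + (1 - κw) • a := by
    simp only [wc, ← hκ]; module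
  have hspan : wc - Del⁻¹ • (Th *ᵥ μ) ∈ Submodule.span ℝ {Th *ᵥ ones, Th *ᵥ R} := by
    rw [hwc]
    refine Submodule.add_mem _ (Submodule.smul_mem _ _ (Submodule.smul_mem _ _
      (Submodule.sub_mem _ ?_ ?_))) (Submodule.smul_mem _ _ ?_) <;>
      exact Submodule.smul_mem _ _ (Submodule.subset_span (by simp))
  obtain ⟨δ, ν, hgrad⟩ := exists_lagrange_of_sub_mem_span hS.det_pos.ne'.isUnit hDel.ne' hspan
  exact meanVarianceUtility_lt_of_lagrange hS hDel hgrad (hw1.trans h1wc.symm)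
    (hwR.trans hRwc.symm) hne

/-- Proposition A.1: the optimal portfolio under a full-investment constraint and a
weight constraint `1_R'w = w_x` is
`w_c* = κ_w(Θμ/B₁ − a) + (w_x − κ_w w_u) l + (a − l (B₃/B₂))`. -/
theorem stmt4 (p : ℕ) (hp : 0 < p)
    (S : Matrix (Fin p) (Fin p) ℝ) (hS : S.PosDef)
    (μ : Fin p → ℝ) (Del : ℝ) (hDel : 0 < Del)
    (R : Fin p → ℝ) (hR : ∀ i, R i = 0 ∨ R i = 1)
    (hRne0 : R ≠ 0) (hRne1 : R ≠ 1)
    (hB1 : (1 : Fin p → ℝ) ⬝ᵥ (S⁻¹ *ᵥ μ) ≠ 0)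
    (hB3 : R ⬝ᵥ (S⁻¹ *ᵥ (1 : Fin p → ℝ)) ≠ 0)
    (hDnz : (R ⬝ᵥ (S⁻¹ *ᵥ R)) * ((1 : Fin p → ℝ) ⬝ᵥ (S⁻¹ *ᵥ (1 : Fin p → ℝ)))
        ≠ (R ⬝ᵥ (S⁻¹ *ᵥ (1 : Fin p → ℝ))) ^ 2) :
    let Th := S⁻¹
    let ones : Fin p → ℝ := 1
    let B1 := ones ⬝ᵥ (Th *ᵥ μ)
    let B2 := ones ⬝ᵥ (Th *ᵥ ones)
    let B3 := R ⬝ᵥ (Th *ᵥ ones)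
    let B4 := R ⬝ᵥ (Th *ᵥ R)
    let κw := B1 / Del
    let a := B2⁻¹ • (Th *ᵥ ones)
    let k := B3⁻¹ • (Th *ᵥ R)
    let wk := B4 / B3
    let wa := B3 / B2
    let l := (wk - wa)⁻¹ • (k - a)
    let wu := R ⬝ᵥ (B1⁻¹ • (Th *ᵥ μ) - B2⁻¹ • (Th *ᵥ ones))
    ∀ wx : ℝ,
      let wc := κw • (B1⁻¹ • (Th *ᵥ μ) - a) + (wx - κw * wu) • l + (a - (B3 / B2) • l)
      (ones ⬝ᵥ wc = 1) ∧ (R ⬝ᵥ wc = wx) ∧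
        ∀ w : Fin p → ℝ, ones ⬝ᵥ w = 1 → R ⬝ᵥ w = wx → w ≠ wc →
          μ ⬝ᵥ w - Del / 2 * (w ⬝ᵥ (S *ᵥ w)) < μ ⬝ᵥ wc - Del / 2 * (wc ⬝ᵥ (S *ᵥ wc)) :=
  stmt4_general p S hS μ Del hDel R hB1 hB3 hDnz
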